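/- Let h ∈ Homeo₊(ℝ) and q ∈ Fix(h). If ψ₀ is a square root of the restriction h|_{(-∞,q)} (i.e., a homeomorphism of (-∞,q) with ψ₀² = h|_{(-∞,q)}), then ψ₀ extends to a square root ψ ∈ Homeo₊(ℝ) of h on all of ℝ. -/

import Mathlib

/-!
Every `g ∈ Homeo₊(ℝ)` has a square root. On each order-connected component `K` of the
complement of `Fix g`, `g` is conjugate to a translation `t ↦ t ± 1` of `ℝ`: parametrise a
fundamental domain `[c, g c)` affinely and transport it by the powers of `g`. These translates
exhaust `K` because a bounded monotone orbit converges to a fixed point. The translation has the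
square root `t ↦ t ± 1/2`, and these square roots glue with the identity on `Fix g` to an increasing
bijection of `ℝ`.

A square root `f` of `h` fixes `q`, since an increasing map with `f (f q) = q` fixes `q`. Hence
`ψ₀` on `(-∞, q)` together with `f` on `[q, ∞)` is the required extension.
-/

open Set Function

theorem Monotone.exists_le_lt_succ {α : Type*} [LinearOrder α] {p : ℤ → α} (hp : Monotone p)
    {y : α} {m M : ℤ} (hm : p m ≤ y) (hM : y < p M) : ∃ n, p n ≤ y ∧ y < p (n + 1) := by
  obtain ⟨n, hn, hmax⟩ := Int.exists_greatest_of_bdd (P := fun n => p n ≤ y)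
    ⟨M, fun n hn => le_of_not_gt fun hMn => (hM.trans_le ((hp hMn.le).trans hn)).false⟩ ⟨m, hm⟩
  exact ⟨n, hn, lt_of_not_ge fun h => (hmax (n + 1) h).not_gt (lt_add_one n)⟩

section Iterate

variable {α : Type*} [ConditionallyCompleteLinearOrder α] [TopologicalSpace α] [OrderTopology α]
  {f : α → α} {c y : α}

theorem Monotone.exists_lt_iterate (hf : Monotone f) (hfc : Continuous f) (hc : c ≤ f c)
    (hfix : ∀ z ∈ Icc c y, f z ≠ z) : ∃ n, y < f^[n] c := by
  by_contra! hbdd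
  have hmono : Monotone fun n => f^[n] c := hf.monotone_iterate_of_le_map hc
  have hbdd' : BddAbove (range fun n => f^[n] c) := ⟨y, forall_mem_range.2 hbdd⟩
  refine hfix _ ⟨le_ciSup_of_le hbdd' 0 le_rfl, ciSup_le hbdd⟩
    (isFixedPt_of_tendsto_iterate (tendsto_atTop_ciSup hmono hbdd') hfc.continuousAt)

theorem Monotone.exists_iterate_lt (hf : Monotone f) (hfc : Continuous f) (hc : f c ≤ c)
    (hfix : ∀ z ∈ Icc y c, f z ≠ z) : ∃ n, f^[n] c < y :=
  Monotone.exists_lt_iterate (α := αᵒᵈ) hf.dual hfc hc fun z hz => hfix z ⟨hz.2, hz.1⟩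

end Iterate

theorem StrictMono.apply_eq_self_of_apply_apply {α : Type*} [LinearOrder α] {f : α → α}
    (hf : StrictMono f) {x : α} (hx : f (f x) = x) : f x = x := by
  by_contra hne
  rcases lt_or_gt_of_ne hne with h | h <;>
  · have h' := hf h
    rw [hx] at h'
    exact lt_asymm h h'

namespace OrderIso

variable {α : Type*} [Preorder α] (g : α ≃o α)

theorem coe_pow (n : ℕ) : ⇑(g ^ n) = g^[n] := by
  induction n with
  | zero => rfl
  | succ n ih => rw [pow_succ, iterate_succ, ← ih]; rfl

theorem zpow_add_one_apply (n : ℤ) (x : α) : (g ^ (n + 1)) x = g ((g ^ n) x) := by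
  rw [add_comm, zpow_one_add]; rfl

theorem zpow_add_one_apply' (n : ℤ) (x : α) : (g ^ (n + 1)) x = (g ^ n) (g x) := by
  rw [zpow_add_one]; rfl

theorem strictMono_zpow_apply {c : α} (hc : c < g c) : StrictMono fun n : ℤ => (g ^ n) c :=
  strictMono_int_of_lt_succ fun n => by
    rw [g.zpow_add_one_apply']
    exact (g ^ n).strictMono hc

end OrderIso

structure IsSqrtOn {α : Type*} [Preorder α] (g f : α → α) (K : Set α) : Prop where
  mapsTo : MapsTo f K K
  strictMonoOn : StrictMonoOn f K
  surjOn : SurjOn f K K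
  apply_apply : ∀ x ∈ K, f (f x) = g x

section Glue

variable {α : Type*} [LinearOrder α] {s : Set α} {φ : Set α → α → α} {g : α → α} {x y z : α}

/-- `φ` is indexed by the component itself, so all points of a component use the same map. -/
noncomputable def glueOnComponents (s : Set α) (φ : Set α → α → α) (x : α) : α :=
  open Classical in if x ∈ s then φ (ordConnectedComponent s x) x else x

theorem glueOnComponents_of_notMem (hx : x ∉ s) : glueOnComponents s φ x = x :=
  if_neg hx

theorem glueOnComponents_of_mem_ordConnectedComponent (hy : y ∈ ordConnectedComponent s x) :
    glueOnComponents s φ y = φ (ordConnectedComponent s x) y := by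
  rw [glueOnComponents, if_pos (ordConnectedComponent_subset hy), ordConnectedComponent_eq hy]

variable (H : ∀ x ∈ s, IsSqrtOn g (φ (ordConnectedComponent s x)) (ordConnectedComponent s x))
include H

theorem glueOnComponents_mem_ordConnectedComponent (hx : x ∈ s) :
    glueOnComponents s φ x ∈ ordConnectedComponent s x := by
  have hxx := self_mem_ordConnectedComponent.2 hx
  rw [glueOnComponents_of_mem_ordConnectedComponent hxx]
  exact (H x hx).mapsTo hxx

theorem glueOnComponents_lt (hxz : x < z) (hz : z ∉ s) : glueOnComponents s φ x < z := by
  by_cases hx : x ∈ s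
  · by_contra! hle
    exact hz (glueOnComponents_mem_ordConnectedComponent H hx (Icc_subset_uIcc ⟨hxz.le, hle⟩))
  · rwa [glueOnComponents_of_notMem hx]

theorem lt_glueOnComponents (hzy : z < y) (hz : z ∉ s) : z < glueOnComponents s φ y := by
  by_cases hy : y ∈ s
  · by_contra! hle
    exact hz (glueOnComponents_mem_ordConnectedComponent H hy (Icc_subset_uIcc' ⟨hle, hzy.le⟩))
  · rwa [glueOnComponents_of_notMem hy]

theorem strictMono_glueOnComponents : StrictMono (glueOnComponents s φ) := by
  intro x y hxy
  by_cases hxys : uIcc x y ⊆ s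
  · have hx : x ∈ s := hxys left_mem_uIcc
    rw [glueOnComponents_of_mem_ordConnectedComponent (self_mem_ordConnectedComponent.2 hx),
      glueOnComponents_of_mem_ordConnectedComponent hxys]
    exact (H x hx).strictMonoOn (self_mem_ordConnectedComponent.2 hx) hxys hxy
  obtain ⟨z, hz, hzs⟩ := not_subset.1 hxys
  rw [uIcc_of_le hxy.le] at hz
  rcases hz.1.eq_or_lt with rfl | hxz
  · rw [glueOnComponents_of_notMem hzs]
    exact lt_glueOnComponents H hxy hzs
  rcases hz.2.eq_or_lt with rfl | hzy
  · rw [glueOnComponents_of_notMem hzs]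
    exact glueOnComponents_lt H hxy hzs
  exact (glueOnComponents_lt H hxz hzs).trans (lt_glueOnComponents H hzy hzs)

theorem surjective_glueOnComponents : Surjective (glueOnComponents s φ) := by
  intro y
  by_cases hy : y ∈ s
  · obtain ⟨x, hx, hxy⟩ := (H y hy).surjOn (self_mem_ordConnectedComponent.2 hy)
    exact ⟨x, (glueOnComponents_of_mem_ordConnectedComponent hx).trans hxy⟩
  · exact ⟨y, glueOnComponents_of_notMem hy⟩

theorem glueOnComponents_glueOnComponents (hg : ∀ x ∉ s, g x = x) (x : α) :
    glueOnComponents s φ (glueOnComponents s φ x) = g x := by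
  by_cases hx : x ∈ s
  · have hxx := self_mem_ordConnectedComponent.2 hx
    rw [glueOnComponents_of_mem_ordConnectedComponent
      (glueOnComponents_mem_ordConnectedComponent H hx),
      glueOnComponents_of_mem_ordConnectedComponent hxx, (H x hx).apply_apply x hxx]
  · rw [glueOnComponents_of_notMem hx, glueOnComponents_of_notMem hx, hg x hx]

end Glue

structure IsTranslationChart (g : ℝ → ℝ) (K : Set ℝ) (σ : ℝ → ℝ) (δ : ℝ) : Prop where
  strictMono : StrictMono σ
  range_eq : range σ = K
  map_add : ∀ t, σ (t + δ) = g (σ t)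

noncomputable def halfStep (σ : ℝ → ℝ) (δ x : ℝ) : ℝ := σ (invFun σ x + δ / 2)

namespace IsTranslationChart

variable {g : ℝ → ℝ} {K : Set ℝ} {σ : ℝ → ℝ} {δ : ℝ}

theorem halfStep_apply (h : IsTranslationChart g K σ δ) (t : ℝ) :
    halfStep σ δ (σ t) = σ (t + δ / 2) := by
  rw [halfStep, leftInverse_invFun h.strictMono.injective t]

theorem isSqrtOn_halfStep (h : IsTranslationChart g K σ δ) : IsSqrtOn g (halfStep σ δ) K := by
  obtain rfl := h.range_eq
  refine ⟨?_, ?_, ?_, ?_⟩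
  · rintro _ ⟨t, rfl⟩
    exact ⟨t + δ / 2, (h.halfStep_apply t).symm⟩
  · rintro _ ⟨t, rfl⟩ _ ⟨s, rfl⟩ hts
    rw [h.halfStep_apply, h.halfStep_apply]
    exact h.strictMono (add_lt_add_left (h.strictMono.lt_iff_lt.1 hts) _)
  · rintro _ ⟨t, rfl⟩
    exact ⟨σ (t - δ / 2), mem_range_self _, by rw [h.halfStep_apply, sub_add_cancel]⟩
  · rintro _ ⟨t, rfl⟩
    rw [h.halfStep_apply, h.halfStep_apply, add_assoc, add_halves, h.map_add]

theorem of_inv {g : ℝ ≃o ℝ} (h : IsTranslationChart ⇑g⁻¹ K σ δ) :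
    IsTranslationChart g K σ (-δ) := by
  refine ⟨h.strictMono, h.range_eq, fun t => ?_⟩
  rw [← RelIso.apply_inv_self g (σ (t + -δ)), ← h.map_add, neg_add_cancel_right]

end IsTranslationChart

section OrbitParam

variable (g : ℝ ≃o ℝ) (c : ℝ)

/-- Affine from `[0, 1)` onto the fundamental domain `[c, g c)`, extended so that
`orbitParam g c (t + 1) = g (orbitParam g c t)`. -/
noncomputable def orbitParam (t : ℝ) : ℝ := (g ^ ⌊t⌋) (c + Int.fract t * (g c - c))

theorem orbitParam_add_one (t : ℝ) : orbitParam g c (t + 1) = g (orbitParam g c t) := by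
  rw [orbitParam, orbitParam, Int.floor_add_one, Int.fract_add_one, g.zpow_add_one_apply]

theorem orbitParam_zero : orbitParam g c 0 = c := by simp [orbitParam]

variable {g c}

theorem orbitParam_mem_Ico (hc : c < g c) (t : ℝ) :
    orbitParam g c t ∈ Ico ((g ^ ⌊t⌋) c) ((g ^ (⌊t⌋ + 1)) c) := by
  have hd : 0 < g c - c := sub_pos.2 hc
  rw [g.zpow_add_one_apply']
  refine ⟨(g ^ ⌊t⌋).monotone ?_, (g ^ ⌊t⌋).strictMono ?_⟩
  · exact le_add_of_nonneg_right (mul_nonneg (Int.fract_nonneg t) hd.le)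
  · linarith [mul_lt_of_lt_one_left hd (Int.fract_lt_one t)]

theorem strictMono_orbitParam (hc : c < g c) : StrictMono (orbitParam g c) := by
  intro t s hts
  rcases (Int.floor_mono hts.le).eq_or_lt with h | h
  · rw [orbitParam, orbitParam, ← h]
    refine (g ^ ⌊t⌋).strictMono (add_lt_add_right (mul_lt_mul_of_pos_right ?_ (sub_pos.2 hc)) c)
    rw [← Int.self_sub_floor, ← Int.self_sub_floor, h]
    linarith
  · calc orbitParam g c t < (g ^ (⌊t⌋ + 1)) c := (orbitParam_mem_Ico hc t).2
      _ ≤ (g ^ ⌊s⌋) c := (g.strictMono_zpow_apply hc).monotone (Int.add_one_le_iff.2 h)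
      _ ≤ orbitParam g c s := (orbitParam_mem_Ico hc s).1

theorem mem_range_orbitParam_of_mem_Ico (hc : c < g c) {n : ℤ} {y : ℝ}
    (hy : y ∈ Ico ((g ^ n) c) ((g ^ (n + 1)) c)) : y ∈ range (orbitParam g c) := by
  obtain ⟨u, rfl⟩ := (g ^ n).surjective y
  rw [g.zpow_add_one_apply', mem_Ico, (g ^ n).le_iff_le, (g ^ n).lt_iff_lt] at hy
  have hd : 0 < g c - c := sub_pos.2 hc
  have hr : (u - c) / (g c - c) ∈ Ico (0 : ℝ) 1 :=
    ⟨div_nonneg (sub_nonneg.2 hy.1) hd.le, (div_lt_one hd).2 (by linarith [hy.2])⟩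
  refine ⟨n + (u - c) / (g c - c), ?_⟩
  rw [orbitParam, Int.floor_intCast_add, Int.floor_eq_zero_iff.2 hr, add_zero,
    Int.fract_intCast_add, Int.fract_eq_self.2 hr, div_mul_cancel₀ _ hd.ne', add_sub_cancel]

theorem mem_range_orbitParam (hc : c < g c) {y : ℝ} {m M : ℤ} (hm : (g ^ m) c ≤ y)
    (hM : y < (g ^ M) c) : y ∈ range (orbitParam g c) :=
  let ⟨_, hn⟩ := (g.strictMono_zpow_apply hc).monotone.exists_le_lt_succ hm hM
  mem_range_orbitParam_of_mem_Ico hc hn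

theorem ordConnected_range_orbitParam (hc : c < g c) : OrdConnected (range (orbitParam g c)) :=
  ⟨by
    rintro _ ⟨t, rfl⟩ _ ⟨s, rfl⟩ y ⟨hty, hys⟩
    exact mem_range_orbitParam hc ((orbitParam_mem_Ico hc t).1.trans hty)
      (hys.trans_lt (orbitParam_mem_Ico hc s).2)⟩

theorem range_orbitParam_subset (hc : c < g c) : range (orbitParam g c) ⊆ {x | g x ≠ x} := by
  rintro _ ⟨t, rfl⟩
  change g _ ≠ _
  rw [← orbitParam_add_one]
  exact (strictMono_orbitParam hc (lt_add_one t)).ne'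

theorem range_orbitParam (hc : c < g c) :
    range (orbitParam g c) = ordConnectedComponent {x | g x ≠ x} c := by
  refine (@subset_ordConnectedComponent _ _ _ _ _ (ordConnected_range_orbitParam hc)
    ⟨0, orbitParam_zero g c⟩ (range_orbitParam_subset hc)).antisymm fun y hy => ?_
  have hfix : ∀ z ∈ uIcc c y, g z ≠ z := hy
  obtain ⟨M, hM⟩ := g.monotone.exists_lt_iterate g.continuous hc.le
    fun z hz => hfix z (Icc_subset_uIcc hz)
  obtain ⟨m, hm⟩ := g.symm.monotone.exists_iterate_lt g.symm.continuous
    (g.symm_apply_le.2 hc.le) fun z hz h => hfix z (Icc_subset_uIcc' hz) (g.symm_apply_eq.1 h).symm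
  refine mem_range_orbitParam hc (m := -m) (M := M) ?_ ?_
  · rw [zpow_neg, zpow_natCast, ← inv_pow, OrderIso.coe_pow]
    exact hm.le
  · rwa [zpow_natCast, OrderIso.coe_pow]

theorem isTranslationChart_orbitParam (hc : c < g c) :
    IsTranslationChart g (ordConnectedComponent {x | g x ≠ x} c) (orbitParam g c) 1 :=
  ⟨strictMono_orbitParam hc, range_orbitParam hc, orbitParam_add_one g c⟩

end OrbitParam

theorem exists_isTranslationChart (g : ℝ ≃o ℝ) {c : ℝ} (hc : g c ≠ c) :
    ∃ p : (ℝ → ℝ) × ℝ, IsTranslationChart g (ordConnectedComponent {x | g x ≠ x} c) p.1 p.2 := by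
  rcases hc.lt_or_gt with hc | hc
  · have hc' : c < g⁻¹ c := g.lt_symm_apply.2 hc
    have hs : {x | g⁻¹ x ≠ x} = {x | g x ≠ x} :=
      ext fun x => not_congr (g.symm_apply_eq.trans eq_comm)
    exact ⟨(orbitParam g⁻¹ c, -1), hs ▸ (isTranslationChart_orbitParam hc').of_inv⟩
  · exact ⟨(orbitParam g c, 1), isTranslationChart_orbitParam hc⟩

noncomputable def componentSqrt (g : ℝ → ℝ) (K : Set ℝ) : ℝ → ℝ :=
  let p := Classical.epsilon fun p : (ℝ → ℝ) × ℝ => IsTranslationChart g K p.1 p.2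
  halfStep p.1 p.2

theorem isSqrtOn_componentSqrt {g : ℝ → ℝ} {K : Set ℝ}
    (h : ∃ p : (ℝ → ℝ) × ℝ, IsTranslationChart g K p.1 p.2) :
    IsSqrtOn g (componentSqrt g K) K :=
  (Classical.epsilon_spec h).isSqrtOn_halfStep

theorem OrderIso.exists_sqrt (g : ℝ ≃o ℝ) : ∃ f : ℝ ≃o ℝ, ∀ x, f (f x) = g x := by
  have H : ∀ x ∈ {x | g x ≠ x}, IsSqrtOn g (componentSqrt g (ordConnectedComponent {x | g x ≠ x} x))
      (ordConnectedComponent {x | g x ≠ x} x) := fun x hx =>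
    isSqrtOn_componentSqrt (exists_isTranslationChart g hx)
  refine ⟨(strictMono_glueOnComponents H).orderIsoOfSurjective _ (surjective_glueOnComponents H),
    fun x => ?_⟩
  rw [StrictMono.coe_orderIsoOfSurjective]
  exact glueOnComponents_glueOnComponents H (fun x hx => not_not.1 hx) x

theorem OrderIso.exists_eqOn_Iio_eqOn_Ici {α : Type*} [LinearOrder α] {ψ₀ : α → α} {q : α}
    (hmono : StrictMonoOn ψ₀ (Iio q)) (himage : ψ₀ '' Iio q = Iio q) (f : α ≃o α) (hf : f q = q) :
    ∃ ψ : α ≃o α, EqOn ψ ψ₀ (Iio q) ∧ EqOn ψ f (Ici q) := by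
  classical
  have hmaps : MapsTo ψ₀ (Iio q) (Iio q) := fun _ hx => himage.subset (mem_image_of_mem ψ₀ hx)
  have hf_ge {x : α} (hx : q ≤ x) : q ≤ f x := hf ▸ f.monotone hx
  set ψ := (Iio q).piecewise ψ₀ f
  have hψ_lt {x : α} (hx : x < q) : ψ x = ψ₀ x := piecewise_eq_of_mem _ _ _ hx
  have hψ_ge {x : α} (hx : q ≤ x) : ψ x = f x := piecewise_eq_of_notMem _ _ _ (not_lt.2 hx)
  have hψ_mono : StrictMono ψ := by
    intro x y hxy
    rcases lt_or_ge y q with hy | hy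
    · rw [hψ_lt (hxy.trans hy), hψ_lt hy]
      exact hmono (hxy.trans hy) hy hxy
    rcases lt_or_ge x q with hx | hx
    · rw [hψ_lt hx, hψ_ge hy]
      exact (hmaps hx).trans_le (hf_ge hy)
    · rw [hψ_ge hx, hψ_ge hy]
      exact f.strictMono hxy
  have hψ_surj : Surjective ψ := by
    intro y
    rcases lt_or_ge y q with hy | hy
    · obtain ⟨x, hx, rfl⟩ := himage.superset hy
      exact ⟨x, hψ_lt hx⟩
    · have hx : q ≤ f.symm y := f.le_symm_apply.2 (hf.symm ▸ hy)
      exact ⟨f.symm y, (hψ_ge hx).trans (f.apply_symm_apply y)⟩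
  exact ⟨hψ_mono.orderIsoOfSurjective ψ hψ_surj, fun x hx => hψ_lt hx, fun x hx => hψ_ge hx⟩

/-- If q is a fixed point of h ∈ Homeo₊(ℝ) and ψ₀ is a square root of the
restriction of h to (-∞,q) (a homeomorphism of (-∞,q) with ψ₀ ∘ ψ₀ = h there),
then ψ₀ extends to a square root ψ ∈ Homeo₊(ℝ) of h. -/
theorem sqrt_extension (h : ℝ ≃o ℝ) (q : ℝ) (hq : h q = q) (ψ₀ : ℝ → ℝ)
    (hmono : StrictMonoOn ψ₀ (Iio q))
    (himage : ψ₀ '' Iio q = Iio q)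
    (hsq : ∀ x < q, ψ₀ (ψ₀ x) = h x) :
    ∃ ψ : ℝ ≃o ℝ, (∀ x < q, ψ x = ψ₀ x) ∧ ∀ x : ℝ, ψ (ψ x) = h x := by
  obtain ⟨f, hf⟩ := h.exists_sqrt
  have hfq : f q = q := f.strictMono.apply_eq_self_of_apply_apply ((hf q).trans hq)
  obtain ⟨ψ, hψ₀, hψf⟩ := OrderIso.exists_eqOn_Iio_eqOn_Ici hmono himage f hfq
  refine ⟨ψ, fun x hx => hψ₀ hx, fun x => ?_⟩
  rcases lt_or_ge x q with hx | hx
  · have hψ₀x : ψ₀ x < q := himage.subset (mem_image_of_mem ψ₀ hx)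
    rw [hψ₀ hx, hψ₀ hψ₀x, hsq x hx]
  · have hfx : q ≤ f x := hfq ▸ f.monotone hx
    rw [hψf hx, hψf hfx, hf]
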